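/- arXiv:0907.5424 — 3 statements merged into one kernel-verified Lean document; each statement's English description precedes it below -/
import Mathlib

section
/- Let I ⊆ ℝ be an interval and let H̄, δH, N : I → ℝ be differentiable with H̄'(φ) ≠ 0 on I. Suppose δH satisfies the linearized Hamilton–Jacobi equation H̄'(φ)·δH'(φ) = (3/2)·H̄(φ)·δH(φ) on I, and N satisfies N'(φ) = −H̄(φ)/(2H̄'(φ)). Then the function φ ↦ δH(φ)·exp(3N(φ)) is constant on I; equivalently δH(φ) = δH(φ_i)·exp(−3(N(φ) − N(φ_i))) for any φ_i, φ ∈ I, so perturbations of an inflationary solution decay exponentially with the number of e-folds (inflation is an attractor). -/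
/-!
The linearized Hamilton–Jacobi equation says `δH' = (3/2)(H̄/H̄') δH`, and the e-fold relation
rewrites the coefficient as `−3N'`. So `δH` solves `δH' = −3N' δH`, whose integrating factor
`exp(3N)` makes `δH · exp(3N)` have zero derivative; the mean value inequality on the interval
then forces it to be constant.
-/

theorem Convex.eq_of_hasDerivAt_eq_zero {E : Type*} [NormedAddCommGroup E] [NormedSpace ℝ E]
    {s : Set ℝ} (hs : Convex ℝ s) {f : ℝ → E} (hf : ∀ x ∈ s, HasDerivAt f 0 x)
    {x y : ℝ} (hx : x ∈ s) (hy : y ∈ s) : f x = f y := by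
  have h := hs.norm_image_sub_le_of_norm_hasDerivWithin_le
    (fun z hz => (hf z hz).hasDerivWithinAt) (fun _ _ => norm_zero.le) hx hy
  simpa [sub_eq_zero, eq_comm] using h

theorem Convex.mul_exp_eq_of_hasDerivAt {s : Set ℝ} (hs : Convex ℝ s) {u u' v v' : ℝ → ℝ}
    (hu : ∀ x ∈ s, HasDerivAt u (u' x) x) (hv : ∀ x ∈ s, HasDerivAt v (v' x) x)
    (hode : ∀ x ∈ s, u' x = -(v' x * u x)) {x y : ℝ} (hx : x ∈ s) (hy : y ∈ s) :
    u x * Real.exp (v x) = u y * Real.exp (v y) := by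
  refine hs.eq_of_hasDerivAt_eq_zero (f := fun z => u z * Real.exp (v z)) (fun z hz => ?_) hx hy
  have h := (hu z hz).mul (hv z hz).exp
  rwa [hode z hz, show -(v' z * u z) * Real.exp (v z) + u z * (Real.exp (v z) * v' z) = 0 by ring]
    at h

theorem deriv_perturbation_eq_neg_three_mul_efolds {Hb Hb' δH δH' N' : ℝ} (hne : Hb' ≠ 0)
    (hlin : Hb' * δH' = (3 / 2) * Hb * δH) (hN : N' = -(Hb / (2 * Hb'))) :
    δH' = -(3 * N' * δH) := by
  rw [hN]
  field_simp
  linarith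

theorem inflationary_attractor_general
    (I : Set ℝ) (hI : Convex ℝ I)
    (Hb Hb' δH δH' N N' : ℝ → ℝ)
    (hδH : ∀ φ ∈ I, HasDerivAt δH (δH' φ) φ)
    (hN : ∀ φ ∈ I, HasDerivAt N (N' φ) φ)
    (hne : ∀ φ ∈ I, Hb' φ ≠ 0)
    (hlin : ∀ φ ∈ I, Hb' φ * δH' φ = (3 / 2) * Hb φ * δH φ)
    (hNeq : ∀ φ ∈ I, N' φ = -(Hb φ / (2 * Hb' φ))) :
    ∀ φi ∈ I, ∀ φ ∈ I,
      δH φ * Real.exp (3 * N φ) = δH φi * Real.exp (3 * N φi) := by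
  intro φi hφi φ hφ
  have h3N : ∀ x ∈ I, HasDerivAt (fun y => 3 * N y) (3 * N' x) x :=
    fun x hx => (hN x hx).const_mul 3
  exact hI.mul_exp_eq_of_hasDerivAt hδH h3N
    (fun x hx => deriv_perturbation_eq_neg_three_mul_efolds (hne x hx) (hlin x hx) (hNeq x hx))
    hφ hφi

/-- **Inflation is an attractor: linear perturbations decay as `e^(−3N)`.**
If on an interval `δH` solves the linearized Hamilton–Jacobi equation
`H̄' δH' = (3/2) H̄ δH` and the e-fold number satisfies `N' = −H̄/(2H̄')`, then
`δH · exp(3N)` is constant, i.e. `δH(φ) = δH(φᵢ) exp(−3(N(φ) − N(φᵢ)))`. -/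
theorem inflationary_attractor
    (I : Set ℝ) (hI : Convex ℝ I)
    (Hb Hb' δH δH' N N' : ℝ → ℝ)
    (hHb : ∀ φ ∈ I, HasDerivAt Hb (Hb' φ) φ)
    (hδH : ∀ φ ∈ I, HasDerivAt δH (δH' φ) φ)
    (hN : ∀ φ ∈ I, HasDerivAt N (N' φ) φ)
    (hne : ∀ φ ∈ I, Hb' φ ≠ 0)
    (hlin : ∀ φ ∈ I, Hb' φ * δH' φ = (3 / 2) * Hb φ * δH φ)
    (hNeq : ∀ φ ∈ I, N' φ = -(Hb φ / (2 * Hb' φ))) :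
    ∀ φi ∈ I, ∀ φ ∈ I,
      δH φ * Real.exp (3 * N φ) = δH φi * Real.exp (3 * N φi) :=
  inflationary_attractor_general I hI Hb Hb' δH δH' N N' hδH hN hne hlin hNeq
end

section
/- (Lyth bound.) Let N₁ < N₂ be real numbers, let φ : [N₁, N₂] → ℝ be continuously differentiable, and let r : [N₁, N₂] → ℝ satisfy (φ'(N))² = r(N)/8 for all N ∈ [N₁, N₂], with r(N) ≥ r₀ for some constant r₀ > 0. Then |φ(N₂) − φ(N₁)| ≥ (N₂ − N₁)·√(r₀/8). In particular (units M_pl = 1), if the tensor-to-scalar ratio satisfies r ≥ 0.01 throughout 60 e-folds, the total field excursion satisfies Δφ ≥ 60·√(0.01/8) > 1, i.e. it is super-Planckian. -/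
/-!
By the mean value theorem `φ N₂ - φ N₁ = (N₂ - N₁) φ'(ξ)` for some `ξ`,
and `|φ'(ξ)| = √(r(ξ)/8) ≥ √(r₀/8)`.
-/

open Set

theorem mul_le_abs_sub_of_le_abs_deriv {f f' : ℝ → ℝ} {a b c : ℝ} (hab : a ≤ b)
    (hf : ContinuousOn f (Icc a b)) (hf' : ∀ x ∈ Ioo a b, HasDerivAt f (f' x) x)
    (hc : ∀ x ∈ Ioo a b, c ≤ |f' x|) : (b - a) * c ≤ |f b - f a| := by
  rcases hab.eq_or_lt with rfl | hlt
  · simp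
  obtain ⟨ξ, hξ, hslope⟩ := exists_hasDerivAt_eq_slope f f' hlt hf hf'
  have hmvt : f b - f a = (b - a) * f' ξ := by
    rw [hslope]
    field_simp [(sub_pos.2 hlt).ne']
  rw [hmvt, abs_mul, abs_of_nonneg (sub_nonneg.2 hab)]
  exact mul_le_mul_of_nonneg_left (hc ξ hξ) (sub_nonneg.2 hab)

theorem one_lt_sixty_mul_sqrt_div_eight : (1 : ℝ) < 60 * Real.sqrt (0.01 / 8) := by
  have h : (1 / 60 : ℝ) < Real.sqrt (0.01 / 8) := by
    rw [Real.lt_sqrt (by norm_num)]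
    norm_num
  linarith

theorem lyth_bound_general (N₁ N₂ : ℝ) (hN : N₁ < N₂) (φ φ' r : ℝ → ℝ) (r₀ : ℝ)
    (hφ : ∀ N ∈ Set.Icc N₁ N₂, HasDerivAt φ (φ' N) N)
    (hsq : ∀ N ∈ Set.Icc N₁ N₂, (φ' N) ^ 2 = r N / 8)
    (hge : ∀ N ∈ Set.Icc N₁ N₂, r₀ ≤ r N) :
    (N₂ - N₁) * Real.sqrt (r₀ / 8) ≤ |φ N₂ - φ N₁|
    ∧ (1 : ℝ) < 60 * Real.sqrt (0.01 / 8) := by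
  have hcont : ContinuousOn φ (Icc N₁ N₂) := fun N hN' =>
    (hφ N hN').continuousAt.continuousWithinAt
  have habs_deriv : ∀ N ∈ Ioo N₁ N₂, Real.sqrt (r₀ / 8) ≤ |φ' N| := fun N hN' => by
    have hN'' := Ioo_subset_Icc_self hN'
    rw [← Real.sqrt_sq_eq_abs, hsq N hN'']
    exact Real.sqrt_le_sqrt (by linarith [hge N hN''])
  exact ⟨mul_le_abs_sub_of_le_abs_deriv hN.le hcont
    (fun N hN' => hφ N (Ioo_subset_Icc_self hN')) habs_deriv,
    one_lt_sixty_mul_sqrt_div_eight⟩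

/-- **The Lyth bound (units `M_pl = 1`).**
If `(dφ/dN)² = r(N)/8` with `r(N) ≥ r₀ > 0` on `[N₁, N₂]` (with `φ` continuously
differentiable there), then `|Δφ| ≥ (N₂ − N₁)√(r₀/8)`. In particular, with `r ≥ 0.01`
over 60 e-folds the excursion is super-Planckian: `60·√(0.01/8) > 1`. -/
theorem lyth_bound (N₁ N₂ : ℝ) (hN : N₁ < N₂) (φ φ' r : ℝ → ℝ) (r₀ : ℝ) (hr₀ : 0 < r₀)
    (hφ : ∀ N ∈ Set.Icc N₁ N₂, HasDerivAt φ (φ' N) N)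
    (hφ'cont : ContinuousOn φ' (Set.Icc N₁ N₂))
    (hsq : ∀ N ∈ Set.Icc N₁ N₂, (φ' N) ^ 2 = r N / 8)
    (hge : ∀ N ∈ Set.Icc N₁ N₂, r₀ ≤ r N) :
    (N₂ - N₁) * Real.sqrt (r₀ / 8) ≤ |φ N₂ - φ N₁|
    ∧ (1 : ℝ) < 60 * Real.sqrt (0.01 / 8) :=
  lyth_bound_general N₁ N₂ hN φ φ' r r₀ hφ hsq hge
end

section
/- (Field range bound for warped D-brane inflation.) Let g_s, α', r_UV, N, V₆, M_pl, Δφ be positive real numbers. Define the D3-brane tension T₃ = ((2π)³·g_s·α'²)^{−1} and the ten-dimensional gravitational coupling κ₁₀² = (1/2)·(2π)⁷·g_s²·α'⁴. Assume: (i) Δφ² < T₃·r_UV² (the canonical inflaton range is bounded by the throat length); (ii) M_pl² = V₆/κ₁₀² (dimensional reduction); and (iii) V₆ > 2π⁴·g_s·N·α'²·r_UV² (the compact volume exceeds the warped throat volume). Then Δφ/M_pl < 2/√N. -/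
/-!
Squared, the bound reads `Δφ² N < 4 M_pl²`. The string-scale constants cancel exactly in
`T₃ r_UV² N = 4 V_throat / κ₁₀²`, so (i) bounds `Δφ² N` by `4 V_throat / κ₁₀²`, (iii) replaces
the throat volume by the larger `V₆`, and (ii) identifies `V₆ / κ₁₀²` with `M_pl²`.
-/

open Real

noncomputable def d3Tension (gs α' : ℝ) : ℝ := ((2 * π) ^ 3 * gs * α' ^ 2)⁻¹

noncomputable def gravCouplingSq (gs α' : ℝ) : ℝ := (1 / 2) * (2 * π) ^ 7 * gs ^ 2 * α' ^ 4

noncomputable def throatVolume (gs N α' rUV : ℝ) : ℝ := 2 * π ^ 4 * gs * N * α' ^ 2 * rUV ^ 2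

lemma gravCouplingSq_pos {gs α' : ℝ} (hgs : gs ≠ 0) (hα' : α' ≠ 0) : 0 < gravCouplingSq gs α' := by
  unfold gravCouplingSq
  positivity

lemma d3Tension_mul_sq_mul_eq_throatVolume_div {gs α' : ℝ} (hgs : gs ≠ 0) (hα' : α' ≠ 0) (rUV N : ℝ) :
    d3Tension gs α' * rUV ^ 2 * N = 4 * throatVolume gs N α' rUV / gravCouplingSq gs α' := by
  unfold d3Tension throatVolume gravCouplingSq
  field_simp
  ring

lemma div_lt_div_sqrt_of_sq_mul_lt {x M c N : ℝ} (hM : 0 < M) (hc : 0 ≤ c) (hN : 0 < N)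
    (h : x ^ 2 * N < c ^ 2 * M ^ 2) : x / M < c / √N := by
  have hsqrtN : 0 < √N := sqrt_pos.mpr hN
  rw [div_lt_div_iff₀ hM hsqrtN]
  have hsq : (x * √N) ^ 2 < (c * M) ^ 2 := by
    rwa [mul_pow, mul_pow, sq_sqrt hN.le]
  exact lt_of_abs_lt (abs_lt_of_sq_lt_sq hsq (by positivity))

theorem warped_brane_field_range_bound_general
    (gs α' rUV N V₆ Mpl Δφ T₃ κsq : ℝ)
    (hgs : 0 < gs) (hα' : 0 < α') (hN : 0 < N)
    (hMpl : 0 < Mpl)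
    (hT₃ : T₃ = ((2 * Real.pi) ^ 3 * gs * α' ^ 2)⁻¹)
    (hκ : κsq = (1 / 2) * (2 * Real.pi) ^ 7 * gs ^ 2 * α' ^ 4)
    (h1 : Δφ ^ 2 < T₃ * rUV ^ 2)
    (h2 : Mpl ^ 2 = V₆ / κsq)
    (h3 : V₆ > 2 * Real.pi ^ 4 * gs * N * α' ^ 2 * rUV ^ 2) :
    Δφ / Mpl < 2 / Real.sqrt N := by
  have hκpos : 0 < κsq := hκ ▸ gravCouplingSq_pos hgs.ne' hα'.ne'
  refine div_lt_div_sqrt_of_sq_mul_lt hMpl zero_le_two hN ?_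
  calc Δφ ^ 2 * N < T₃ * rUV ^ 2 * N := mul_lt_mul_of_pos_right h1 hN
    _ = 4 * throatVolume gs N α' rUV / κsq :=
      hT₃ ▸ hκ ▸ d3Tension_mul_sq_mul_eq_throatVolume_div hgs.ne' hα'.ne' rUV N
    _ < 4 * V₆ / κsq := by unfold throatVolume; gcongr
    _ = 2 ^ 2 * Mpl ^ 2 := by rw [h2]; ring

/-- **Field range bound for warped D-brane inflation: `Δφ/M_pl < 2/√N`.**
With the D3-brane tension `T₃ = ((2π)³ g_s α'²)⁻¹` and `κ₁₀² = (1/2)(2π)⁷ g_s² α'⁴`,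
if `Δφ² < T₃ r_UV²`, `M_pl² = V₆/κ₁₀²`, and `V₆ > 2π⁴ g_s N α'² r_UV²`, then
`Δφ/M_pl < 2/√N`. -/
theorem warped_brane_field_range_bound
    (gs α' rUV N V₆ Mpl Δφ T₃ κsq : ℝ)
    (hgs : 0 < gs) (hα' : 0 < α') (hrUV : 0 < rUV) (hN : 0 < N) (hV₆ : 0 < V₆)
    (hMpl : 0 < Mpl) (hΔφ : 0 < Δφ)
    (hT₃ : T₃ = ((2 * Real.pi) ^ 3 * gs * α' ^ 2)⁻¹)
    (hκ : κsq = (1 / 2) * (2 * Real.pi) ^ 7 * gs ^ 2 * α' ^ 4)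
    (h1 : Δφ ^ 2 < T₃ * rUV ^ 2)
    (h2 : Mpl ^ 2 = V₆ / κsq)
    (h3 : V₆ > 2 * Real.pi ^ 4 * gs * N * α' ^ 2 * rUV ^ 2) :
    Δφ / Mpl < 2 / Real.sqrt N :=
  warped_brane_field_range_bound_general gs α' rUV N V₆ Mpl Δφ T₃ κsq hgs hα' hN hMpl hT₃ hκ h1 h2
    h3
end
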